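/- Control of the relative entropy by the relative total energy (Lemma on I, part (ii)): Assume (F̄, v̄, θ̄) ∈ Γ_{M,δ}, that ψ(F,θ) ∈ C³(ℝ^{d×d} × [0,∞)) and η(F,θ), Σ(F,θ) ∈ C²(ℝ^{d×d} × [0,∞)) satisfy the constitutive relations Σ = ∂ψ/∂F, η = −∂ψ/∂θ, e = ψ + θη, and the Gibbs conditions ψ_FF > 0 and η_θ > 0. Under the growth hypotheses (a1), (a2), (a3), there exists a constant C > 0 such that |η(F,θ|F̄,θ̄)| ≤ C · I(F,v,θ|F̄,v̄,θ̄) for all (F,v,θ) and for all (F̄, v̄, θ̄) ∈ Γ_{M,δ}, where η(F,θ|F̄,θ̄) = η(F,θ) − η(F̄,θ̄) − η_F(F̄,θ̄):(F − F̄) − η_θ(F̄,θ̄)(θ − θ̄). -/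

import Mathlib

/-!
Write `I − ½|v − v̄|²` as the elastic part `ψ(F,θ̄) − ψ(F̄,θ̄) − Σ(F̄,θ̄):(F − F̄)` plus the thermal
part `ψ(F,θ) − ψ(F,θ̄) + η(F,θ)(θ − θ̄)`. On a bounded box the Gibbs conditions, made uniform by
compactness, bound these below by multiples of `|F − F̄|²` and `(θ − θ̄)²`, while Taylor's formula
bounds the relative entropy above by a multiple of `|F − F̄|² + (θ − θ̄)²`. Outside the box, (a1)
makes `I` grow like `c(|F|^p + θ^q)` whereas, by (a3), the relative entropy grows more slowly, so
there it is even bounded by `I` itself.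
-/

open scoped RealInnerProductSpace Topology
open MeasureTheory

noncomputable section

open Set Filter

theorem le_max_one_of_rpow_le {p t R : ℝ} (hp : 1 ≤ p) (h : t ^ p ≤ R) : t ≤ max 1 R := by
  rcases le_total t 1 with h1 | h1
  · exact h1.trans (le_max_left _ _)
  · exact (Real.self_le_rpow_of_one_le h1 hp).trans (h.trans (le_max_right _ _))

theorem le_max_one_of_rpow_add_rpow_le {p q a b R : ℝ} (hp : 1 ≤ p) (hq : 1 ≤ q) (ha : 0 ≤ a)
    (hb : 0 ≤ b) (h : a ^ p + b ^ q ≤ R) : a ≤ max 1 R ∧ b ≤ max 1 R :=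
  ⟨le_max_one_of_rpow_le hp (by linarith [Real.rpow_nonneg hb q]),
    le_max_one_of_rpow_le hq (by linarith [Real.rpow_nonneg ha p])⟩

theorem exists_mul_le_mul_rpow_add {p : ℝ} (hp : 1 < p) (a : ℝ) {ε : ℝ} (hε : 0 < ε) :
    ∃ C, ∀ t : ℝ, 0 ≤ t → a * t ≤ ε * t ^ p + C := by
  obtain ⟨T, hT⟩ := eventually_atTop.1 <|
    (tendsto_rpow_atTop (sub_pos.2 hp)).eventually_ge_atTop (a / ε)
  refine ⟨|a| * max T 1, fun t ht => ?_⟩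
  rcases le_total t (max T 1) with h | h
  · nlinarith [abs_nonneg a, le_abs_self a, Real.rpow_nonneg ht p]
  · have ht₀ : 0 < t := zero_lt_one.trans_le (le_of_max_le_right h)
    have hpow : ε * t ^ p = ε * t ^ (p - 1) * t := by
      rw [Real.rpow_sub_one ht₀.ne', mul_assoc, div_mul_cancel₀ _ ht₀.ne']
    have ha : a ≤ ε * t ^ (p - 1) := (div_le_iff₀' hε).1 (hT t (le_of_max_le_left h))
    nlinarith [abs_nonneg a, le_max_right T 1]

theorem le_of_hasDerivAt_of_mul_sub_nonneg {w w' : ℝ → ℝ} {a b : ℝ}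
    (hw : ContinuousOn w (uIcc a b)) (hderiv : ∀ s ∈ uIoo a b, HasDerivAt w (w' s) s)
    (hsign : ∀ s ∈ uIoo a b, 0 ≤ w' s * (s - a)) : w a ≤ w b := by
  have hdiff : DifferentiableOn ℝ w (uIoo a b) := fun s hs =>
    (hderiv s hs).differentiableAt.differentiableWithinAt
  rcases le_total a b with hab | hab
  · rw [uIcc_of_le hab] at hw
    rw [uIoo_of_le hab] at hderiv hsign hdiff
    refine monotoneOn_of_deriv_nonneg (convex_Icc a b) hw (by rwa [interior_Icc]) (fun s hs => ?_)
      (left_mem_Icc.2 hab) (right_mem_Icc.2 hab) hab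
    rw [interior_Icc] at hs
    rw [(hderiv s hs).deriv]
    exact nonneg_of_mul_nonneg_left (hsign s hs) (sub_pos.2 hs.1)
  · rw [uIcc_of_ge hab] at hw
    rw [uIoo_of_ge hab] at hderiv hsign hdiff
    refine antitoneOn_of_deriv_nonpos (convex_Icc b a) hw (by rwa [interior_Icc]) (fun s hs => ?_)
      (left_mem_Icc.2 hab) (right_mem_Icc.2 hab) hab
    rw [interior_Icc] at hs
    rw [(hderiv s hs).deriv]
    exact nonpos_of_mul_nonneg_left (hsign s hs) (sub_neg.2 hs.2)

theorem half_mul_sq_sub_le_sub_add_mul_of_le_deriv {h e e' : ℝ → ℝ} {a b m : ℝ}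
    (hh : ContinuousOn h (uIcc a b)) (he : ContinuousOn e (uIcc a b))
    (hh' : ∀ s ∈ uIoo a b, HasDerivAt h (-e s) s) (he' : ∀ s ∈ uIoo a b, HasDerivAt e (e' s) s)
    (hm : ∀ s ∈ uIoo a b, m ≤ e' s) :
    m / 2 * (b - a) ^ 2 ≤ h b - h a + e b * (b - a) := by
  -- `w` is smallest at `a`, where it vanishes.
  have key := le_of_hasDerivAt_of_mul_sub_nonneg
    (w := fun s => h s - h a + e s * (s - a) - m / 2 * (s - a) ^ 2)
    (w' := fun s => (e' s - m) * (s - a))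
    ((((hh.sub continuousOn_const).add (he.mul (continuousOn_id.sub continuousOn_const))).sub
      (continuousOn_const.mul ((continuousOn_id.sub continuousOn_const).pow 2))))
    (fun s hs => by
      refine ((((hh' s hs).sub_const _).add ((he' s hs).mul ((hasDerivAt_id s).sub_const a))).sub
        ((((hasDerivAt_id s).sub_const a).pow 2).const_mul (m / 2))).congr_deriv ?_
      simp only [id_eq, mul_one, Nat.cast_ofNat, Nat.add_one_sub_one, pow_one]
      ring)
    (fun s hs => by nlinarith [hm s hs, sq_nonneg (s - a)])
  simp only [sub_self, mul_zero, zero_pow two_ne_zero, sub_zero] at key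
  linarith

section Taylor

variable {Z G : Type*} [NormedAddCommGroup Z] [NormedSpace ℝ Z] [NormedAddCommGroup G]
  [NormedSpace ℝ G]

theorem add_fderiv_add_le_of_le_fderiv_fderiv {Φ : Z → ℝ} {Φ' : Z → Z →L[ℝ] ℝ}
    {Φ'' : Z → Z →L[ℝ] Z →L[ℝ] ℝ} {x y : Z} {m : ℝ}
    (hΦ : ∀ z ∈ segment ℝ x y, HasFDerivAt Φ (Φ' z) z)
    (hΦ' : ∀ z ∈ segment ℝ x y, HasFDerivAt Φ' (Φ'' z) z)
    (hm : ∀ z ∈ segment ℝ x y, m ≤ Φ'' z (y - x) (y - x)) :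
    Φ x + Φ' x (y - x) + m / 2 ≤ Φ y := by
  set v := y - x
  have hseg : ∀ t ∈ Icc (0:ℝ) 1, x + t • v ∈ segment ℝ x y := fun t ht =>
    (segment_eq_image' ℝ x y).symm ▸ mem_image_of_mem _ ht
  have hline : ∀ t : ℝ, HasDerivAt (fun s : ℝ => x + s • v) v t := fun t => by
    simpa using ((hasDerivAt_id t).smul_const v).const_add x
  have hg : ∀ t ∈ Icc (0:ℝ) 1, HasDerivAt (fun s => Φ (x + s • v) - Φ' x v * s - m / 2 * s ^ 2)
      (Φ' (x + t • v) v - Φ' x v - m * t) t := fun t ht => by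
    refine ((((hΦ _ (hseg t ht)).comp_hasDerivAt t (hline t)).sub
      ((hasDerivAt_id t).const_mul (Φ' x v))).sub
      ((hasDerivAt_pow 2 t).const_mul (m / 2))).congr_deriv ?_
    push_cast; ring
  have hg' : ∀ t ∈ Icc (0:ℝ) 1, HasDerivAt (fun s => Φ' (x + s • v) v - Φ' x v - m * s)
      (Φ'' (x + t • v) v v - m) t := fun t ht => by
    have h₀ := (hΦ' _ (hseg t ht)).comp_hasDerivAt t (hline t)
    have h₁ := h₀.clm_apply (hasDerivAt_const t v)
    have h : HasDerivAt (fun s => Φ' (x + s • v) v) (Φ'' (x + t • v) v v) t := by simpa using h₁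
    exact ((h.sub_const (Φ' x v)).sub ((hasDerivAt_id t).const_mul m)).congr_deriv (by simp)
  have hIcc : ∀ {t}, t ∈ Icc (0:ℝ) 1 → uIcc 0 t ⊆ Icc 0 1 := fun ht =>
    (uIcc_of_le ht.1).symm ▸ Icc_subset_Icc_right ht.2
  have hpos : ∀ {t}, t ∈ Icc (0:ℝ) 1 → ∀ s ∈ uIoo 0 t, 0 ≤ s - 0 := fun ht s hs => by
    rw [uIoo_of_le ht.1] at hs; linarith [hs.1]
  have hslope : ∀ t ∈ Icc (0:ℝ) 1, 0 ≤ Φ' (x + t • v) v - Φ' x v - m * t := fun t ht => by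
    simpa using le_of_hasDerivAt_of_mul_sub_nonneg
      (fun s hs => (hg' s (hIcc ht hs)).continuousAt.continuousWithinAt)
      (fun s hs => hg' s (hIcc ht (uIoo_subset_uIcc_self hs)))
      (fun s hs => mul_nonneg (sub_nonneg.2 (hm _ (hseg s (hIcc ht (uIoo_subset_uIcc_self hs)))))
        (hpos ht s hs))
  have h01 : (1:ℝ) ∈ Icc 0 1 := right_mem_Icc.2 zero_le_one
  have := le_of_hasDerivAt_of_mul_sub_nonneg
      (fun s hs => (hg s (hIcc h01 hs)).continuousAt.continuousWithinAt)
      (fun s hs => hg s (hIcc h01 (uIoo_subset_uIcc_self hs)))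
      (fun s hs => mul_nonneg (hslope s (hIcc h01 (uIoo_subset_uIcc_self hs))) (hpos h01 s hs))
  simp only [zero_smul, add_zero, one_smul, mul_zero, mul_one, one_pow, sub_zero, ne_eq,
    OfNat.ofNat_ne_zero, not_false_eq_true, zero_pow, add_sub_cancel, v] at this
  linarith

theorem norm_sub_sub_fderiv_le {f : Z → G} {f' : Z → Z →L[ℝ] G} {f'' : Z → Z →L[ℝ] Z →L[ℝ] G}
    {s : Set Z} {x y : Z} {C : ℝ} (hs : Convex ℝ s)
    (hf : ∀ z ∈ s, HasFDerivWithinAt f (f' z) s z)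
    (hf' : ∀ z ∈ s, HasFDerivWithinAt f' (f'' z) s z) (hC : ∀ z ∈ s, ‖f'' z‖ ≤ C)
    (hx : x ∈ s) (hy : y ∈ s) :
    ‖f y - f x - f' x (y - x)‖ ≤ C * ‖y - x‖ ^ 2 := by
  have hxy : segment ℝ x y ⊆ s := hs.segment_subset hx hy
  have hC₀ : 0 ≤ C := (norm_nonneg (f'' x)).trans (hC x hx)
  have hlip : ∀ z ∈ segment ℝ x y, ‖f' z - f' x‖ ≤ C * ‖y - x‖ := fun z hz => by
    have hzx : ‖z - x‖ ≤ ‖y - x‖ := by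
      obtain ⟨t, ht, rfl⟩ := (segment_eq_image' ℝ x y) ▸ hz
      rw [add_sub_cancel_left, norm_smul, Real.norm_of_nonneg ht.1]
      exact mul_le_of_le_one_left (norm_nonneg _) ht.2
    exact (hs.norm_image_sub_le_of_norm_hasFDerivWithin_le hf' hC hx (hxy hz)).trans
      (mul_le_mul_of_nonneg_left hzx hC₀)
  have := (convex_segment x y).norm_image_sub_le_of_norm_hasFDerivWithin_le
    (f := fun z => f z - f' x z)
    (fun z hz => ((hf z (hxy hz)).mono hxy).sub (f' x).hasFDerivWithinAt)
    hlip (left_mem_segment ℝ x y) (right_mem_segment ℝ x y)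
  have e : f y - f x - f' x (y - x) = f y - f' x y - (f x - f' x x) := by rw [map_sub]; abel
  rwa [e, sq, ← mul_assoc]

end Taylor

theorem exists_pos_mul_sq_le_of_isCompact {X E : Type*} [TopologicalSpace X]
    [NormedAddCommGroup E] [NormedSpace ℝ E] [ProperSpace E] {K : Set X} (hK : IsCompact K)
    {B : X → E →L[ℝ] E →L[ℝ] ℝ} (hB : ContinuousOn (fun w : X × E => B w.1 w.2 w.2) (K ×ˢ univ))
    (hpos : ∀ x ∈ K, ∀ v ≠ 0, 0 < B x v v) :
    ∃ m > 0, ∀ x ∈ K, ∀ v, m * ‖v‖ ^ 2 ≤ B x v v := by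
  obtain ⟨m, hm, hmin⟩ := (hK.prod (isCompact_sphere (0:E) 1)).exists_forall_le' (a := 0)
    (hB.mono (prod_mono_right (subset_univ _)))
    (fun w hw => hpos _ hw.1 _ (ne_zero_of_mem_sphere one_ne_zero ⟨w.2, hw.2⟩))
  refine ⟨m, hm, fun x hx v => ?_⟩
  rcases eq_or_ne v 0 with rfl | hv
  · simp
  have hv₀ : ‖v‖ ≠ 0 := norm_ne_zero_iff.2 hv
  have hu := hmin (x, ‖v‖⁻¹ • v) ⟨hx, by simp [norm_smul, hv₀]⟩
  have hB : B x v v = ‖v‖ ^ 2 * B x (‖v‖⁻¹ • v) (‖v‖⁻¹ • v) := by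
    simp only [map_smul, smul_apply, smul_eq_mul]
    field_simp
  rw [hB, mul_comm]
  exact mul_le_mul_of_nonneg_left hu (by positivity)

theorem sq_norm_le_sq_norm_fst_add_sq_norm_snd {α β : Type*} [SeminormedAddCommGroup α]
    [SeminormedAddCommGroup β] (x : α × β) : ‖x‖ ^ 2 ≤ ‖x.1‖ ^ 2 + ‖x.2‖ ^ 2 := by
  rw [Prod.norm_def]
  rcases max_choice ‖x.1‖ ‖x.2‖ with h | h <;> rw [h] <;>
    nlinarith [sq_nonneg ‖x.1‖, sq_nonneg ‖x.2‖]

theorem univ_prod_Ici_mem_nhds {E : Type*} [TopologicalSpace E] {z : E × ℝ} (hz : 0 < z.2) :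
    (univ : Set E) ×ˢ Ici (0:ℝ) ∈ 𝓝 z :=
  prod_mem_nhds univ_mem (Ici_mem_nhds hz)

section HalfSpace

variable {E G : Type*} [NormedAddCommGroup E] [NormedSpace ℝ E] [NormedAddCommGroup G]
  [NormedSpace ℝ G] {f : E → ℝ → G} {x : E} {t : ℝ}

theorem hasFDerivAt_slice_left (h : DifferentiableAt ℝ (fun z : E × ℝ => f z.1 z.2) (x, t)) :
    HasFDerivAt (fun y => f y t)
      ((fderiv ℝ (fun z : E × ℝ => f z.1 z.2) (x, t)).comp (ContinuousLinearMap.inl ℝ E ℝ)) x :=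
  h.hasFDerivAt.comp x (f := fun y : E => (y, t)) (hasFDerivAt_prodMk_left (𝕜 := ℝ) x t)

theorem hasDerivAt_slice_right (h : DifferentiableAt ℝ (fun z : E × ℝ => f z.1 z.2) (x, t)) :
    HasDerivAt (fun s => f x s) (fderiv ℝ (fun z : E × ℝ => f z.1 z.2) (x, t) (0, 1)) t :=
  h.hasFDerivAt.comp_hasDerivAt t ((hasDerivAt_const t x).prodMk (hasDerivAt_id t))

theorem fderiv_slice_left_apply (h : DifferentiableAt ℝ (fun z : E × ℝ => f z.1 z.2) (x, t))
    (v : E) :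
    fderiv ℝ (fun y => f y t) x v = fderiv ℝ (fun z : E × ℝ => f z.1 z.2) (x, t) (v, 0) := by
  simp [(hasFDerivAt_slice_left h).fderiv]

theorem iteratedFDeriv_two_slice_left_apply
    (h₁ : ∀ y, DifferentiableAt ℝ (fun z : E × ℝ => f z.1 z.2) (y, t))
    (h₂ : DifferentiableAt ℝ (fderiv ℝ (fun z : E × ℝ => f z.1 z.2)) (x, t)) (v w : E) :
    iteratedFDeriv ℝ 2 (fun y => f y t) x ![v, w] =
      fderiv ℝ (fderiv ℝ (fun z : E × ℝ => f z.1 z.2)) (x, t) (v, 0) (w, 0) := by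
  have hslice : fderiv ℝ (fun y => f y t) = fun y =>
      (fderiv ℝ (fun z : E × ℝ => f z.1 z.2) (y, t)).comp (ContinuousLinearMap.inl ℝ E ℝ) :=
    funext fun y => (hasFDerivAt_slice_left (h₁ y)).fderiv
  have hd : HasFDerivAt (fun y =>
      (fderiv ℝ (fun z : E × ℝ => f z.1 z.2) (y, t)).comp (ContinuousLinearMap.inl ℝ E ℝ)) _ x :=
    (h₂.hasFDerivAt.comp x (f := fun y : E => (y, t))
      (hasFDerivAt_prodMk_left (𝕜 := ℝ) x t)).clm_comp
      (hasFDerivAt_const (ContinuousLinearMap.inl ℝ E ℝ) x)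
  rw [iteratedFDeriv_two_apply, hslice, hd.fderiv]
  simp

end HalfSpace

theorem fderiv_slice_left_add_deriv_slice_right {E : Type*} [NormedAddCommGroup E]
    [NormedSpace ℝ E] {f : E → ℝ → ℝ} {x : E} {t : ℝ}
    (h : DifferentiableAt ℝ (fun z : E × ℝ => f z.1 z.2) (x, t)) (v : E) (τ : ℝ) :
    fderiv ℝ (fun y => f y t) x v + deriv (fun s => f x s) t * τ =
      fderiv ℝ (fun z : E × ℝ => f z.1 z.2) (x, t) (v, τ) := by
  rw [fderiv_slice_left_apply h, (hasDerivAt_slice_right h).deriv, mul_comm, ← smul_eq_mul,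
    ← map_smul, ← map_add]
  simp

theorem fderivWithin_univ_prod_Ici_apply_zero_one {E : Type*} [NormedAddCommGroup E]
    [NormedSpace ℝ E] {f : E → ℝ → ℝ} {z : E × ℝ} (hz : 0 ≤ z.2)
    (hf : DifferentiableWithinAt ℝ (fun z : E × ℝ => f z.1 z.2) (univ ×ˢ Ici 0) z)
    (hs : DifferentiableAt ℝ (fun s => f z.1 s) z.2) :
    fderivWithin ℝ (fun z : E × ℝ => f z.1 z.2) (univ ×ˢ Ici 0) z (0, 1) =
      deriv (fun s => f z.1 s) z.2 := by
  have h : HasDerivWithinAt (fun s => f z.1 s)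
      (fderivWithin ℝ (fun z : E × ℝ => f z.1 z.2) (univ ×ˢ Ici 0) z (0, 1)) (Ici 0) z.2 :=
    hf.hasFDerivWithinAt.comp_hasDerivWithinAt (x := z.2) (f := fun s => (z.1, s))
      ((hasDerivAt_const _ z.1).prodMk (hasDerivAt_id _)).hasDerivWithinAt
      (fun s hs => ⟨mem_univ _, hs⟩)
  have hu := uniqueDiffOn_Ici (0:ℝ) _ hz
  rw [← h.derivWithin hu, hs.hasDerivAt.hasDerivWithinAt.derivWithin hu]

theorem exists_abs_le_mul_add_of_isLittleO {E : Type*} [NormedAddCommGroup E] [ProperSpace E]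
    {p q : ℝ} (hp : 1 ≤ p) (hq : 1 ≤ q) {g : E → ℝ → ℝ}
    (hg : ContinuousOn (fun z : E × ℝ => g z.1 z.2) (univ ×ˢ Ici 0))
    (hlim : ∀ ε > (0:ℝ), ∃ R₀, ∀ F θ, 0 ≤ θ → R₀ ≤ ‖F‖ ^ p + θ ^ q →
      |g F θ| ≤ ε * (‖F‖ ^ p + θ ^ q))
    {ε : ℝ} (hε : 0 < ε) : ∃ C, ∀ F θ, 0 ≤ θ → |g F θ| ≤ ε * (‖F‖ ^ p + θ ^ q) + C := by
  obtain ⟨R₀, hR₀⟩ := hlim ε hε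
  set K := Metric.closedBall (0 : E) (max 1 R₀) ×ˢ Icc 0 (max 1 R₀)
  obtain ⟨C, hC⟩ := ((isCompact_closedBall _ _).prod isCompact_Icc).exists_bound_of_continuousOn
    (hg.mono fun z (hz : z ∈ K) => ⟨mem_univ _, hz.2.1⟩)
  refine ⟨max C 0, fun F θ hθ => ?_⟩
  have hP : 0 ≤ ε * (‖F‖ ^ p + θ ^ q) := by positivity
  rcases le_total R₀ (‖F‖ ^ p + θ ^ q) with h | h
  · linarith [hR₀ F θ hθ h, le_max_right C 0]
  · obtain ⟨hF, hθK⟩ := le_max_one_of_rpow_add_rpow_le hp hq (norm_nonneg F) hθ h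
    have := hC (F, θ) ⟨mem_closedBall_zero_iff.2 hF, hθ, hθK⟩
    rw [Real.norm_eq_abs] at this
    linarith [le_max_left C 0]

theorem exists_norm_le_of_continuousOn_closedBall_prod_Icc {E G : Type*} [NormedAddCommGroup E]
    [ProperSpace E] [SeminormedAddGroup G] {g : E → ℝ → G} {M δ : ℝ}
    (hg : ContinuousOn (fun z : E × ℝ => g z.1 z.2) (Metric.closedBall 0 M ×ˢ Icc δ M)) :
    ∃ A, ∀ Fb θb, ‖Fb‖ ≤ M → δ ≤ θb → θb ≤ M → ‖g Fb θb‖ ≤ A := by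
  obtain ⟨A, hA⟩ :=
    ((isCompact_closedBall (0 : E) M).prod isCompact_Icc).exists_bound_of_continuousOn hg
  exact ⟨A, fun Fb θb hFb hδθb hθbM => hA (Fb, θb) ⟨mem_closedBall_zero_iff.2 hFb, hδθb, hθbM⟩⟩

section Thermoelasticity

variable {E : Type*} [NormedAddCommGroup E] [InnerProductSpace ℝ E]

def relEntropy (η : E → ℝ → ℝ) (Fb : E) (θb : ℝ) (F : E) (θ : ℝ) : ℝ :=
  η F θ - η Fb θb - fderiv ℝ (fun F' => η F' θb) Fb (F - Fb)
    - deriv (fun s => η Fb s) θb * (θ - θb)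

/-- `I(F,v,θ|F̄,v̄,θ̄)` without its kinetic part `½|v - v̄|²`. -/
def relEnergy (ψ : E → ℝ → ℝ) (Sig : E → ℝ → E) (η : E → ℝ → ℝ) (Fb : E) (θb : ℝ) (F : E)
    (θ : ℝ) : ℝ :=
  (ψ F θ - ψ Fb θb - ⟪Sig Fb θb, F - Fb⟫ + η Fb θb * (θ - θb)) + (η F θ - η Fb θb) * (θ - θb)

variable {η : E → ℝ → ℝ}

theorem relEntropy_eq_sub_sub_fderiv {Fb : E} {θb : ℝ}
    (hη : DifferentiableAt ℝ (fun z : E × ℝ => η z.1 z.2) (Fb, θb)) (F : E) (θ : ℝ) :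
    relEntropy η Fb θb F θ = η F θ - η Fb θb -
      fderiv ℝ (fun z : E × ℝ => η z.1 z.2) (Fb, θb) (F - Fb, θ - θb) := by
  rw [relEntropy, sub_sub _ (fderiv ℝ _ Fb _), fderiv_slice_left_add_deriv_slice_right hη]

variable [ProperSpace E] {ψ : E → ℝ → ℝ} {Sig : E → ℝ → E}

theorem exists_pos_mul_norm_sub_sq_le_sub_sub_inner
    (hψ : ContDiffOn ℝ 2 (fun z : E × ℝ => ψ z.1 z.2) (univ ×ˢ Ici 0))
    (hSig : ∀ F θ, 0 < θ → ∀ V, ⟪Sig F θ, V⟫ = fderiv ℝ (fun F' => ψ F' θ) F V)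
    (hGibbs : ∀ F θ, 0 < θ → ∀ V : E, V ≠ 0 →
      0 < iteratedFDeriv ℝ 2 (fun F' => ψ F' θ) F ![V, V])
    {δ : ℝ} (hδ : 0 < δ) (K : ℝ) :
    ∃ m > 0, ∀ Fb θb, ‖Fb‖ ≤ K → δ ≤ θb → θb ≤ K → ∀ F, ‖F‖ ≤ K →
      m * ‖F - Fb‖ ^ 2 ≤ ψ F θb - ψ Fb θb - ⟪Sig Fb θb, F - Fb⟫ := by
  set Ψ := fun z : E × ℝ => ψ z.1 z.2
  have hC2 : ∀ z : E × ℝ, 0 < z.2 → ContDiffAt ℝ 2 Ψ z := fun z hz =>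
    hψ.contDiffAt (univ_prod_Ici_mem_nhds hz)
  have hD : ∀ z : E × ℝ, 0 < z.2 → DifferentiableAt ℝ Ψ z := fun z hz =>
    (hC2 z hz).differentiableAt (by norm_num)
  have hD2 : ∀ z : E × ℝ, 0 < z.2 → DifferentiableAt ℝ (fderiv ℝ Ψ) z := fun z hz =>
    ((hC2 z hz).fderiv_right (m := 1) le_rfl).differentiableAt one_ne_zero
  have hQ : IsCompact (Metric.closedBall (0 : E) K ×ˢ Icc δ K) :=
    (isCompact_closedBall _ _).prod isCompact_Icc
  have hpos : ∀ z ∈ Metric.closedBall (0 : E) K ×ˢ Icc δ K, 0 < z.2 := fun z hz =>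
    hδ.trans_le hz.2.1
  -- `B z` is the `F`-block of the Hessian of `(F, θ) ↦ ψ F θ` at `z`.
  obtain ⟨m, hm, hmin⟩ := exists_pos_mul_sq_le_of_isCompact hQ
    (B := fun z => (fderiv ℝ (fderiv ℝ Ψ) z).bilinearComp (ContinuousLinearMap.inl ℝ E ℝ)
      (ContinuousLinearMap.inl ℝ E ℝ))
    (fun w hw => by
      have hc : ContinuousAt (fderiv ℝ (fderiv ℝ Ψ)) w.1 :=
        (((hC2 _ (hpos _ hw.1)).fderiv_right (m := 1) le_rfl).fderiv_right (m := 0)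
          le_rfl).continuousAt
      have hv : Continuous fun w : (E × ℝ) × E => ((w.2, 0) : E × ℝ) :=
        continuous_snd.prodMk continuous_const
      exact (((hc.comp continuousAt_fst).clm_apply hv.continuousAt).clm_apply
        hv.continuousAt).continuousWithinAt)
    (fun z hz v hv => by
      simpa [iteratedFDeriv_two_slice_left_apply (fun y => hD (y, z.2) (hpos z hz))
        (hD2 z (hpos z hz))] using hGibbs z.1 z.2 (hpos z hz) v hv)
  refine ⟨m / 2, half_pos hm, fun Fb θb hFb hδθb hθbK F hF => ?_⟩
  have hseg : ∀ z ∈ segment ℝ (Fb, θb) (F, θb), z ∈ Metric.closedBall (0 : E) K ×ˢ Icc δ K :=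
    ((convex_closedBall _ _).prod (convex_Icc _ _)).segment_subset
      ⟨mem_closedBall_zero_iff.2 hFb, hδθb, hθbK⟩ ⟨mem_closedBall_zero_iff.2 hF, hδθb, hθbK⟩
  have key := add_fderiv_add_le_of_le_fderiv_fderiv (m := m * ‖F - Fb‖ ^ 2)
    (fun z hz => (hD z (hpos z (hseg z hz))).hasFDerivAt)
    (fun z hz => (hD2 z (hpos z (hseg z hz))).hasFDerivAt)
    (fun z hz => by
      simpa only [Prod.mk_sub_mk, sub_self, ContinuousLinearMap.bilinearComp_apply,
        ContinuousLinearMap.inl_apply] using hmin z (hseg z hz) (F - Fb))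
  have hinner : fderiv ℝ Ψ (Fb, θb) ((F, θb) - (Fb, θb)) = ⟪Sig Fb θb, F - Fb⟫ := by
    rw [Prod.mk_sub_mk, sub_self, hSig Fb θb (hδ.trans_le hδθb)]
    exact (fderiv_slice_left_apply (hD (Fb, θb) (hδ.trans_le hδθb)) _).symm
  rw [hinner] at key
  linarith

theorem exists_pos_mul_sub_sq_le_sub_add_mul
    (hψ : ContDiffOn ℝ 1 (fun z : E × ℝ => ψ z.1 z.2) (univ ×ˢ Ici 0))
    (hη : ContDiffOn ℝ 1 (fun z : E × ℝ => η z.1 z.2) (univ ×ˢ Ici 0))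
    (hψη : ∀ F θ, 0 < θ → η F θ = - deriv (fun s => ψ F s) θ)
    (hGibbs : ∀ F θ, 0 ≤ θ → 0 < deriv (fun s => η F s) θ) (K : ℝ) :
    ∃ m > 0, ∀ F θb θ, ‖F‖ ≤ K → 0 ≤ θb → θb ≤ K → 0 ≤ θ → θ ≤ K →
      m * (θ - θb) ^ 2 ≤ ψ F θ - ψ F θb + η F θ * (θ - θb) := by
  have hS : UniqueDiffOn ℝ ((univ : Set E) ×ˢ Ici (0:ℝ)) :=
    uniqueDiffOn_univ.prod (uniqueDiffOn_Ici 0)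
  have hQS : Metric.closedBall (0 : E) K ×ˢ Icc 0 K ⊆ univ ×ˢ Ici 0 := fun z hz =>
    ⟨mem_univ _, hz.2.1⟩
  -- Taken one-sided on `θ ≥ 0`, `η_θ` is continuous up to `θ = 0`, hence has a positive minimum
  -- on the box.
  have hηθ : ∀ z ∈ (univ : Set E) ×ˢ Ici (0:ℝ),
      fderivWithin ℝ (fun z : E × ℝ => η z.1 z.2) (univ ×ˢ Ici 0) z (0, 1) =
        deriv (fun s => η z.1 s) z.2 := fun z hz =>
    fderivWithin_univ_prod_Ici_apply_zero_one hz.2 (hη.differentiableOn one_ne_zero z hz)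
      (differentiableAt_of_deriv_ne_zero (hGibbs z.1 z.2 hz.2).ne')
  obtain ⟨m, hm, hmin⟩ := ((isCompact_closedBall (0 : E) K).prod isCompact_Icc).exists_forall_le'
    (((hη.continuousOn_fderivWithin hS le_rfl).clm_apply continuousOn_const).mono hQS) (a := 0)
    (fun z hz => (hηθ z (hQS hz)).symm ▸ hGibbs z.1 z.2 hz.2.1)
  refine ⟨m / 2, half_pos hm, fun F θb θ hF hθb hθbK hθ hθK => ?_⟩
  have hmaps : MapsTo (fun s : ℝ => (F, s)) (uIcc θb θ) (univ ×ˢ Ici 0) := fun s hs =>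
    ⟨mem_univ _, (le_min hθb hθ).trans hs.1⟩
  have hint : ∀ s ∈ uIoo θb θ, 0 < s ∧ s ≤ K := fun s hs =>
    ⟨(le_min hθb hθ).trans_lt hs.1, hs.2.le.trans (max_le hθbK hθK)⟩
  refine half_mul_sq_sub_le_sub_add_mul_of_le_deriv (e' := fun s => deriv (fun s => η F s) s)
    (hψ.continuousOn.comp (continuous_const.prodMk continuous_id).continuousOn hmaps)
    (hη.continuousOn.comp (continuous_const.prodMk continuous_id).continuousOn hmaps)
    (fun s hs => ?_) (fun s hs => ?_) (fun s hs => ?_)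
  · have h := hasDerivAt_slice_right ((hψ.contDiffAt
      (univ_prod_Ici_mem_nhds (z := (F, s)) (hint s hs).1)).differentiableAt one_ne_zero)
    rwa [hψη F s (hint s hs).1, neg_neg, h.deriv]
  · exact (differentiableAt_of_deriv_ne_zero (hGibbs F s (hint s hs).1.le).ne').hasDerivAt
  · have hs' : (F, s) ∈ Metric.closedBall (0 : E) K ×ˢ Icc 0 K :=
      ⟨mem_closedBall_zero_iff.2 hF, (hint s hs).1.le, (hint s hs).2⟩
    simpa only [hηθ _ (hQS hs')] using hmin _ hs'

theorem exists_abs_relEntropy_le_mul_sq_add_sq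
    (hη : ContDiffOn ℝ 2 (fun z : E × ℝ => η z.1 z.2) (univ ×ˢ Ici 0)) (K : ℝ) :
    ∃ C, ∀ Fb θb F θ, ‖Fb‖ ≤ K → 0 < θb → θb ≤ K → ‖F‖ ≤ K → 0 ≤ θ → θ ≤ K →
      |relEntropy η Fb θb F θ| ≤ C * (‖F - Fb‖ ^ 2 + (θ - θb) ^ 2) := by
  set S := (univ : Set E) ×ˢ Ici (0:ℝ)
  set Q := Metric.closedBall (0 : E) K ×ˢ Icc 0 K
  have hS : UniqueDiffOn ℝ S := uniqueDiffOn_univ.prod (uniqueDiffOn_Ici 0)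
  have hQS : Q ⊆ S := fun z hz => ⟨mem_univ _, hz.2.1⟩
  have hη' : ContDiffOn ℝ 1 (fderivWithin ℝ (fun z : E × ℝ => η z.1 z.2) S) S :=
    hη.fderivWithin hS le_rfl
  obtain ⟨C, hC⟩ :=
    ((isCompact_closedBall (0 : E) K).prod isCompact_Icc).exists_bound_of_continuousOn
    ((hη'.continuousOn_fderivWithin hS le_rfl).mono hQS)
  refine ⟨C, fun Fb θb F θ hFb hθb hθbK hF hθ hθK => ?_⟩
  have hnhds : S ∈ 𝓝 (Fb, θb) := univ_prod_Ici_mem_nhds (z := (Fb, θb)) hθb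
  have hzb : (Fb, θb) ∈ Q := ⟨mem_closedBall_zero_iff.2 hFb, hθb.le, hθbK⟩
  have key := norm_sub_sub_fderiv_le ((convex_closedBall _ _).prod (convex_Icc _ _))
    (fun z hz => ((hη.differentiableOn two_ne_zero z (hQS hz)).hasFDerivWithinAt).mono hQS)
    (fun z hz => ((hη'.differentiableOn one_ne_zero z (hQS hz)).hasFDerivWithinAt).mono hQS)
    hC hzb (⟨mem_closedBall_zero_iff.2 hF, hθ, hθK⟩ : (F, θ) ∈ Q)
  rw [fderivWithin_of_mem_nhds hnhds, Prod.mk_sub_mk, ← relEntropy_eq_sub_sub_fderiv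
    ((hη.contDiffAt hnhds).differentiableAt two_ne_zero), Real.norm_eq_abs] at key
  refine key.trans (mul_le_mul_of_nonneg_left ?_ ((norm_nonneg _).trans (hC _ hzb)))
  simpa using sq_norm_le_sq_norm_fst_add_sq_norm_snd (F - Fb, θ - θb)

theorem exists_abs_relEntropy_le_mul_relEnergy_of_norm_le
    (hψ : ContDiffOn ℝ 2 (fun z : E × ℝ => ψ z.1 z.2) (univ ×ˢ Ici 0))
    (hη : ContDiffOn ℝ 2 (fun z : E × ℝ => η z.1 z.2) (univ ×ˢ Ici 0))
    (hSig : ∀ F θ, 0 < θ → ∀ V, ⟪Sig F θ, V⟫ = fderiv ℝ (fun F' => ψ F' θ) F V)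
    (hψη : ∀ F θ, 0 < θ → η F θ = - deriv (fun s => ψ F s) θ)
    (hGibbsF : ∀ F θ, 0 < θ → ∀ V : E, V ≠ 0 →
      0 < iteratedFDeriv ℝ 2 (fun F' => ψ F' θ) F ![V, V])
    (hGibbsθ : ∀ F θ, 0 ≤ θ → 0 < deriv (fun s => η F s) θ) {δ : ℝ} (hδ : 0 < δ) (K : ℝ) :
    ∃ C > 0, ∀ Fb θb, ‖Fb‖ ≤ K → δ ≤ θb → θb ≤ K → ∀ F θ, ‖F‖ ≤ K → 0 ≤ θ → θ ≤ K →
      |relEntropy η Fb θb F θ| ≤ C * relEnergy ψ Sig η Fb θb F θ := by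
  obtain ⟨m₁, hm₁, hF⟩ := exists_pos_mul_norm_sub_sq_le_sub_sub_inner hψ hSig hGibbsF hδ K
  obtain ⟨m₂, hm₂, hθ⟩ := exists_pos_mul_sub_sq_le_sub_add_mul (hψ.of_le one_le_two)
    (hη.of_le one_le_two) hψη hGibbsθ K
  obtain ⟨C, hC⟩ := exists_abs_relEntropy_le_mul_sq_add_sq hη K
  have hμ : 0 < min m₁ m₂ := lt_min hm₁ hm₂
  refine ⟨max C 1 / min m₁ m₂, by positivity, fun Fb θb hFb hδθb hθbK F θ hFK hθ₀ hθK => ?_⟩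
  set D := ‖F - Fb‖ ^ 2 + (θ - θb) ^ 2
  have hD : min m₁ m₂ * D ≤ relEnergy ψ Sig η Fb θb F θ := by
    have h₁ := hF Fb θb hFb hδθb hθbK F hFK
    have h₂ := hθ F θb θ hFK (hδ.le.trans hδθb) hθbK hθ₀ hθK
    have : relEnergy ψ Sig η Fb θb F θ = (ψ F θb - ψ Fb θb - ⟪Sig Fb θb, F - Fb⟫) +
        (ψ F θ - ψ F θb + η F θ * (θ - θb)) := by
      rw [relEnergy]; ring
    rw [this]
    nlinarith [min_le_left m₁ m₂, min_le_right m₁ m₂, sq_nonneg ‖F - Fb‖, sq_nonneg (θ - θb)]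
  calc |relEntropy η Fb θb F θ| ≤ C * D := hC Fb θb F θ hFb (hδ.trans_le hδθb) hθbK hFK hθ₀ hθK
    _ ≤ max C 1 / min m₁ m₂ * (min m₁ m₂ * D) := by
      rw [← mul_assoc, div_mul_cancel₀ _ hμ.ne']
      exact mul_le_mul_of_nonneg_right (le_max_left C 1) (by positivity)
    _ ≤ max C 1 / min m₁ m₂ * relEnergy ψ Sig η Fb θb F θ :=
      mul_le_mul_of_nonneg_left hD (by positivity)

theorem exists_mul_sub_le_relEnergy {p q c M δ : ℝ} (hp : 1 < p) (hc : 0 < c) (hδ : 0 ≤ δ)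
    (hψ : ContinuousOn (fun z : E × ℝ => ψ z.1 z.2) (univ ×ˢ Ici 0))
    (hSig : ContinuousOn (fun z : E × ℝ => Sig z.1 z.2) (univ ×ˢ Ici 0))
    (he : ∀ F θ, 0 ≤ θ → c * (‖F‖ ^ p + θ ^ q) - c ≤ ψ F θ + θ * η F θ)
    (hηP : ∀ ε > (0:ℝ), ∃ C, ∀ F θ, 0 ≤ θ → |η F θ| ≤ ε * (‖F‖ ^ p + θ ^ q) + C) :
    ∃ B, ∀ Fb θb, ‖Fb‖ ≤ M → δ ≤ θb → θb ≤ M → ∀ F θ, 0 ≤ θ →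
      c / 2 * (‖F‖ ^ p + θ ^ q) - B ≤ relEnergy ψ Sig η Fb θb F θ := by
  have hΓ : Metric.closedBall (0 : E) M ×ˢ Icc δ M ⊆ univ ×ˢ Ici 0 := fun z hz =>
    ⟨mem_univ _, hδ.trans hz.2.1⟩
  obtain ⟨A₁, hA₁⟩ := exists_norm_le_of_continuousOn_closedBall_prod_Icc (hψ.mono hΓ)
  obtain ⟨A₂, hA₂⟩ := exists_norm_le_of_continuousOn_closedBall_prod_Icc (hSig.mono hΓ)
  obtain ⟨C₁, hC₁⟩ := hηP (c / (4 * (|M| + 1))) (by positivity)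
  obtain ⟨C₂, hC₂⟩ := exists_mul_le_mul_rpow_add hp A₂ (ε := c / 4) (by positivity)
  refine ⟨c + (|M| + 1) * C₁ + A₁ + C₂ + A₂ * |M|, fun Fb θb hFb hδθb hθbM F θ hθ => ?_⟩
  have hθη : θb * η F θ ≤ c / 4 * (‖F‖ ^ p + θ ^ q) + (|M| + 1) * C₁ :=
    calc θb * η F θ ≤ θb * |η F θ| := mul_le_mul_of_nonneg_left (le_abs_self _) (hδ.trans hδθb)
      _ ≤ (|M| + 1) * |η F θ| :=
        mul_le_mul_of_nonneg_right (by linarith [le_abs_self M]) (abs_nonneg _)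
      _ ≤ (|M| + 1) * (c / (4 * (|M| + 1)) * (‖F‖ ^ p + θ ^ q) + C₁) :=
        mul_le_mul_of_nonneg_left (hC₁ F θ hθ) (by positivity)
      _ = c / 4 * (‖F‖ ^ p + θ ^ q) + (|M| + 1) * C₁ := by field_simp
  have hψb : ψ Fb θb ≤ A₁ := (le_abs_self _).trans (hA₁ Fb θb hFb hδθb hθbM)
  have hinner : ⟪Sig Fb θb, F - Fb⟫ ≤ c / 4 * (‖F‖ ^ p + θ ^ q) + C₂ + A₂ * |M| := by
    have hSigb := hA₂ Fb θb hFb hδθb hθbM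
    have hFFb : ‖F - Fb‖ ≤ ‖F‖ + |M| := (norm_sub_le _ _).trans (by linarith [le_abs_self M])
    have := hC₂ ‖F‖ (norm_nonneg F)
    nlinarith [real_inner_le_norm (Sig Fb θb) (F - Fb), norm_nonneg (Sig Fb θb),
      norm_nonneg (F - Fb), Real.rpow_nonneg hθ q]
  have hG : relEnergy ψ Sig η Fb θb F θ =
      (ψ F θ + θ * η F θ) - θb * η F θ - ψ Fb θb - ⟪Sig Fb θb, F - Fb⟫ := by
    rw [relEnergy]; ring
  linarith [he F θ hθ]

theorem exists_abs_relEntropy_le_mul_add {p q M δ : ℝ} (hp : 1 < p) (hq : 1 < q) (hδ : 0 < δ)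
    (hη : ContDiffOn ℝ 1 (fun z : E × ℝ => η z.1 z.2) (univ ×ˢ Ici 0))
    (hηP : ∀ ε > (0:ℝ), ∃ C, ∀ F θ, 0 ≤ θ → |η F θ| ≤ ε * (‖F‖ ^ p + θ ^ q) + C)
    {ε : ℝ} (hε : 0 < ε) :
    ∃ B, ∀ Fb θb, ‖Fb‖ ≤ M → δ ≤ θb → θb ≤ M → ∀ F θ, 0 ≤ θ →
      |relEntropy η Fb θb F θ| ≤ ε * (‖F‖ ^ p + θ ^ q) + B := by
  have hnhds : ∀ z ∈ Metric.closedBall (0 : E) M ×ˢ Icc δ M, univ ×ˢ Ici 0 ∈ 𝓝 z :=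
    fun z hz => univ_prod_Ici_mem_nhds (hδ.trans_le hz.2.1)
  obtain ⟨A₁, hA₁⟩ := exists_norm_le_of_continuousOn_closedBall_prod_Icc
    (hη.continuousOn.mono fun z hz => mem_of_mem_nhds (hnhds z hz))
  obtain ⟨A₂, hA₂⟩ := exists_norm_le_of_continuousOn_closedBall_prod_Icc
    (g := fun F θ => fderiv ℝ (fun z : E × ℝ => η z.1 z.2) (F, θ))
    fun z hz => ((hη.contDiffAt (hnhds z hz)).continuousAt_fderiv one_ne_zero).continuousWithinAt
  obtain ⟨C₁, hC₁⟩ := hηP (ε / 3) (by positivity)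
  obtain ⟨C₂, hC₂⟩ := exists_mul_le_mul_rpow_add hp A₂ (ε := ε / 3) (by positivity)
  obtain ⟨C₃, hC₃⟩ := exists_mul_le_mul_rpow_add hq A₂ (ε := ε / 3) (by positivity)
  refine ⟨C₁ + A₁ + C₂ + C₃ + 2 * A₂ * |M|, fun Fb θb hFb hδθb hθbM F θ hθ => ?_⟩
  have hz : (Fb, θb) ∈ Metric.closedBall (0 : E) M ×ˢ Icc δ M :=
    ⟨mem_closedBall_zero_iff.2 hFb, hδθb, hθbM⟩
  rw [relEntropy_eq_sub_sub_fderiv ((hη.contDiffAt (hnhds _ hz)).differentiableAt one_ne_zero)]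
  have hDη := hA₂ Fb θb hFb hδθb hθbM
  have hincr : ‖((F - Fb, θ - θb) : E × ℝ)‖ ≤ ‖F‖ + θ + 2 * |M| := by
    have h₁ : ‖F - Fb‖ ≤ ‖F‖ + |M| := (norm_sub_le _ _).trans (by linarith [le_abs_self M])
    have h₂ : ‖θ - θb‖ ≤ θ + |M| := by
      rw [Real.norm_eq_abs, abs_le]; constructor <;> linarith [le_abs_self M]
    rw [Prod.norm_def]
    exact max_le (h₁.trans (by linarith [abs_nonneg M]))
      (h₂.trans (by linarith [abs_nonneg M, norm_nonneg F]))
  have hlin : |fderiv ℝ (fun z : E × ℝ => η z.1 z.2) (Fb, θb) (F - Fb, θ - θb)| ≤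
      A₂ * ‖F‖ + A₂ * θ + 2 * A₂ * |M| := by
    rw [← Real.norm_eq_abs]
    refine (ContinuousLinearMap.le_opNorm _ _).trans ?_
    nlinarith [mul_le_mul hDη hincr (norm_nonneg _) ((norm_nonneg _).trans hDη)]
  have hηb : |η Fb θb| ≤ A₁ := hA₁ Fb θb hFb hδθb hθbM
  have hP : 0 ≤ ε * (‖F‖ ^ p + θ ^ q) := by positivity
  have htri := abs_sub (η F θ - η Fb θb)
    (fderiv ℝ (fun z : E × ℝ => η z.1 z.2) (Fb, θb) (F - Fb, θ - θb))
  linarith [abs_sub (η F θ) (η Fb θb), hC₁ F θ hθ, hC₂ ‖F‖ (norm_nonneg F), hC₃ θ hθ]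

theorem exists_abs_relEntropy_le_relEnergy_of_le_rpow_add_rpow {p q c M δ : ℝ} (hp : 1 < p)
    (hq : 1 < q) (hc : 0 < c) (hδ : 0 < δ)
    (hψ : ContinuousOn (fun z : E × ℝ => ψ z.1 z.2) (univ ×ˢ Ici 0))
    (hSig : ContinuousOn (fun z : E × ℝ => Sig z.1 z.2) (univ ×ˢ Ici 0))
    (hη : ContDiffOn ℝ 1 (fun z : E × ℝ => η z.1 z.2) (univ ×ˢ Ici 0))
    (he : ∀ F θ, 0 ≤ θ → c * (‖F‖ ^ p + θ ^ q) - c ≤ ψ F θ + θ * η F θ)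
    (hηP : ∀ ε > (0:ℝ), ∃ C, ∀ F θ, 0 ≤ θ → |η F θ| ≤ ε * (‖F‖ ^ p + θ ^ q) + C) :
    ∃ R, ∀ Fb θb, ‖Fb‖ ≤ M → δ ≤ θb → θb ≤ M → ∀ F θ, 0 ≤ θ → R ≤ ‖F‖ ^ p + θ ^ q →
      |relEntropy η Fb θb F θ| ≤ relEnergy ψ Sig η Fb θb F θ := by
  obtain ⟨B₁, hB₁⟩ := exists_mul_sub_le_relEnergy (M := M) hp hc hδ.le hψ hSig he hηP
  obtain ⟨B₂, hB₂⟩ := exists_abs_relEntropy_le_mul_add (M := M) hp hq hδ hη hηP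
    (ε := c / 4) (by positivity)
  refine ⟨4 * (B₁ + B₂) / c, fun Fb θb hFb hδθb hθbM F θ hθ hR => ?_⟩
  rw [div_le_iff₀ hc] at hR
  linarith [hB₁ Fb θb hFb hδθb hθbM F θ hθ, hB₂ Fb θb hFb hδθb hθbM F θ hθ]

end Thermoelasticity

theorem relative_entropy_controlled_by_relative_total_energy_general
    (d : ℕ) (p q : ℝ) (hp : 1 < p) (hq : 1 < q)
    (ψ : EuclideanSpace ℝ (Fin d × Fin d) → ℝ → ℝ)
    (Sig : EuclideanSpace ℝ (Fin d × Fin d) → ℝ → EuclideanSpace ℝ (Fin d × Fin d))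
    (η : EuclideanSpace ℝ (Fin d × Fin d) → ℝ → ℝ)
    -- regularity: ψ ∈ C³, η, Σ ∈ C² on ℝ^{d×d} × [0,∞)
    (hψreg : ContDiffOn ℝ 3 (fun z : EuclideanSpace ℝ (Fin d × Fin d) × ℝ => ψ z.1 z.2)
      (Set.univ ×ˢ Set.Ici 0))
    (hηreg : ContDiffOn ℝ 2 (fun z : EuclideanSpace ℝ (Fin d × Fin d) × ℝ => η z.1 z.2)
      (Set.univ ×ˢ Set.Ici 0))
    (hSigreg : ContDiffOn ℝ 2 (fun z : EuclideanSpace ℝ (Fin d × Fin d) × ℝ => Sig z.1 z.2)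
      (Set.univ ×ˢ Set.Ici 0))
    -- constitutive relations: Σ = ∂ψ/∂F, η = −∂ψ/∂θ (and e = ψ + θη)
    (hconstSig : ∀ F θ, 0 ≤ θ → ∀ V, ⟪Sig F θ, V⟫ = fderiv ℝ (fun F' => ψ F' θ) F V)
    (hconstη : ∀ F θ, 0 ≤ θ → η F θ = - deriv (fun s => ψ F s) θ)
    -- Gibbs thermodynamic stability: ψ_FF > 0 and η_θ > 0
    (hGibbsF : ∀ F θ, 0 ≤ θ → ∀ V : EuclideanSpace ℝ (Fin d × Fin d), V ≠ 0 →
      0 < iteratedFDeriv ℝ 2 (fun F' => ψ F' θ) F ![V, V])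
    (hGibbsθ : ∀ F θ, 0 ≤ θ → 0 < deriv (fun s => η F s) θ)
    -- (a1): growth of the internal energy e = ψ + θ η
    (c : ℝ) (hc : 0 < c)
    (ha1 : ∀ F θ, 0 ≤ θ →
      c * (‖F‖ ^ p + θ ^ q) - c ≤ ψ F θ + θ * η F θ ∧
      ψ F θ + θ * η F θ ≤ c * (‖F‖ ^ p + θ ^ q) + c)
    -- (a3): |η(F,θ)|/(|F|^p + θ^q) → 0
    (ha3 : ∀ ε > (0:ℝ), ∃ R₀, ∀ F θ, 0 ≤ θ → R₀ ≤ ‖F‖ ^ p + θ ^ q →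
      |η F θ| ≤ ε * (‖F‖ ^ p + θ ^ q))
    -- the compact set Γ_{M,δ}
    (M δ : ℝ) (hδ : 0 < δ) :
    ∃ C > (0:ℝ),
      ∀ (Fb : EuclideanSpace ℝ (Fin d × Fin d)) (vb : EuclideanSpace ℝ (Fin d)) (θb : ℝ),
        ‖Fb‖ ≤ M → ‖vb‖ ≤ M → δ ≤ θb → θb ≤ M →
        ∀ (F : EuclideanSpace ℝ (Fin d × Fin d)) (v : EuclideanSpace ℝ (Fin d)) (θ : ℝ),
          0 ≤ θ →
          |η F θ - η Fb θb - fderiv ℝ (fun F' => η F' θb) Fb (F - Fb)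
              - deriv (fun s => η Fb s) θb * (θ - θb)| ≤
            C * ((ψ F θ - ψ Fb θb - ⟪Sig Fb θb, F - Fb⟫ + η Fb θb * (θ - θb))
                + (η F θ - η Fb θb) * (θ - θb) + (1/2) * ‖v - vb‖ ^ 2) := by
  have hηP : ∀ ε > (0:ℝ), ∃ C, ∀ F θ, 0 ≤ θ → |η F θ| ≤ ε * (‖F‖ ^ p + θ ^ q) + C :=
    fun ε hε => exists_abs_le_mul_add_of_isLittleO hp.le hq.le hηreg.continuousOn ha3 hε
  obtain ⟨R, hfar⟩ :=
    exists_abs_relEntropy_le_relEnergy_of_le_rpow_add_rpow (M := M) hp hq hc hδ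
      hψreg.continuousOn hSigreg.continuousOn (hηreg.of_le one_le_two)
      (fun F θ hθ => (ha1 F θ hθ).1) hηP
  set K := max M (max 1 R)
  obtain ⟨C, hC, hnear⟩ := exists_abs_relEntropy_le_mul_relEnergy_of_norm_le
    (hψreg.of_le (by norm_num)) hηreg (fun F θ hθ => hconstSig F θ hθ.le)
    (fun F θ hθ => hconstη F θ hθ.le) (fun F θ hθ => hGibbsF F θ hθ.le) hGibbsθ hδ K
  refine ⟨max 1 C, by positivity, fun Fb vb θb hFb _ hδθb hθbM F v θ hθ => ?_⟩
  have key : |relEntropy η Fb θb F θ| ≤ max 1 C * relEnergy ψ Sig η Fb θb F θ := by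
    rcases le_total R (‖F‖ ^ p + θ ^ q) with hR | hR
    · have h := hfar Fb θb hFb hδθb hθbM F θ hθ hR
      exact h.trans (le_mul_of_one_le_left ((abs_nonneg _).trans h) (le_max_left 1 C))
    · obtain ⟨hF, hθK⟩ := le_max_one_of_rpow_add_rpow_le hp.le hq.le (norm_nonneg F) hθ hR
      have h := hnear Fb θb (hFb.trans (le_max_left _ _)) hδθb (hθbM.trans (le_max_left _ _))
        F θ (hF.trans (le_max_right _ _)) hθ (hθK.trans (le_max_right _ _))
      exact h.trans (mul_le_mul_of_nonneg_right (le_max_right 1 C)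
        (nonneg_of_mul_nonneg_right ((abs_nonneg _).trans h) hC))
  calc _ ≤ max 1 C * relEnergy ψ Sig η Fb θb F θ := key
    _ ≤ _ := mul_le_mul_of_nonneg_left (le_add_of_nonneg_right (by positivity)) (by positivity)

/-- **Lemma 5.2 (ii): control of the relative entropy by the relative total energy.**
For `(F̄,v̄,θ̄) ∈ Γ_{M,δ}`, under the constitutive relations, the Gibbs conditions and
the growth hypotheses (a1)–(a3), there is `C > 0` with
`|η(F,θ|F̄,θ̄)| ≤ C · I(F,v,θ|F̄,v̄,θ̄)` for all `(F,v,θ)`, where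
`η(F,θ|F̄,θ̄) = η(F,θ) − η(F̄,θ̄) − η_F(F̄,θ̄):(F−F̄) − η_θ(F̄,θ̄)(θ−θ̄)`. -/
theorem relative_entropy_controlled_by_relative_total_energy
    (d : ℕ) (p q : ℝ) (hp : 1 < p) (hq : 1 < q)
    (ψ : EuclideanSpace ℝ (Fin d × Fin d) → ℝ → ℝ)
    (Sig : EuclideanSpace ℝ (Fin d × Fin d) → ℝ → EuclideanSpace ℝ (Fin d × Fin d))
    (η : EuclideanSpace ℝ (Fin d × Fin d) → ℝ → ℝ)
    -- regularity: ψ ∈ C³, η, Σ ∈ C² on ℝ^{d×d} × [0,∞)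
    (hψreg : ContDiffOn ℝ 3 (fun z : EuclideanSpace ℝ (Fin d × Fin d) × ℝ => ψ z.1 z.2)
      (Set.univ ×ˢ Set.Ici 0))
    (hηreg : ContDiffOn ℝ 2 (fun z : EuclideanSpace ℝ (Fin d × Fin d) × ℝ => η z.1 z.2)
      (Set.univ ×ˢ Set.Ici 0))
    (hSigreg : ContDiffOn ℝ 2 (fun z : EuclideanSpace ℝ (Fin d × Fin d) × ℝ => Sig z.1 z.2)
      (Set.univ ×ˢ Set.Ici 0))
    -- constitutive relations: Σ = ∂ψ/∂F, η = −∂ψ/∂θ (and e = ψ + θη)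
    (hconstSig : ∀ F θ, 0 ≤ θ → ∀ V, ⟪Sig F θ, V⟫ = fderiv ℝ (fun F' => ψ F' θ) F V)
    (hconstη : ∀ F θ, 0 ≤ θ → η F θ = - deriv (fun s => ψ F s) θ)
    -- Gibbs thermodynamic stability: ψ_FF > 0 and η_θ > 0
    (hGibbsF : ∀ F θ, 0 ≤ θ → ∀ V : EuclideanSpace ℝ (Fin d × Fin d), V ≠ 0 →
      0 < iteratedFDeriv ℝ 2 (fun F' => ψ F' θ) F ![V, V])
    (hGibbsθ : ∀ F θ, 0 ≤ θ → 0 < deriv (fun s => η F s) θ)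
    -- (a1): growth of the internal energy e = ψ + θ η
    (c : ℝ) (hc : 0 < c)
    (ha1 : ∀ F θ, 0 ≤ θ →
      c * (‖F‖ ^ p + θ ^ q) - c ≤ ψ F θ + θ * η F θ ∧
      ψ F θ + θ * η F θ ≤ c * (‖F‖ ^ p + θ ^ q) + c)
    -- (a2): |Σ(F,θ)|/(|F|^p + θ^q) → 0
    (ha2 : ∀ ε > (0:ℝ), ∃ R₀, ∀ F θ, 0 ≤ θ → R₀ ≤ ‖F‖ ^ p + θ ^ q →
      ‖Sig F θ‖ ≤ ε * (‖F‖ ^ p + θ ^ q))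
    -- (a3): |η(F,θ)|/(|F|^p + θ^q) → 0
    (ha3 : ∀ ε > (0:ℝ), ∃ R₀, ∀ F θ, 0 ≤ θ → R₀ ≤ ‖F‖ ^ p + θ ^ q →
      |η F θ| ≤ ε * (‖F‖ ^ p + θ ^ q))
    -- the compact set Γ_{M,δ}
    (M δ : ℝ) (hM : 0 < M) (hδ : 0 < δ) :
    ∃ C > (0:ℝ),
      ∀ (Fb : EuclideanSpace ℝ (Fin d × Fin d)) (vb : EuclideanSpace ℝ (Fin d)) (θb : ℝ),
        ‖Fb‖ ≤ M → ‖vb‖ ≤ M → δ ≤ θb → θb ≤ M →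
        ∀ (F : EuclideanSpace ℝ (Fin d × Fin d)) (v : EuclideanSpace ℝ (Fin d)) (θ : ℝ),
          0 ≤ θ →
          |η F θ - η Fb θb - fderiv ℝ (fun F' => η F' θb) Fb (F - Fb)
              - deriv (fun s => η Fb s) θb * (θ - θb)| ≤
            C * ((ψ F θ - ψ Fb θb - ⟪Sig Fb θb, F - Fb⟫ + η Fb θb * (θ - θb))
                + (η F θ - η Fb θb) * (θ - θb) + (1/2) * ‖v - vb‖ ^ 2) :=
  relative_entropy_controlled_by_relative_total_energy_general d p q hp hq ψ Sig η hψreg hηreg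
    hSigreg hconstSig hconstη hGibbsF hGibbsθ c hc ha1 ha3 M δ hδ
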